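/- Let σ² > 0 and define a sequence (V_k) of positive reals satisfying V_1 ≤ σ² and V_k < (1.6/σ² + 1/V_{k-1})^{-1} for all k ≥ 2. If additionally V_1 < σ²/1.6, then V_k < σ²/(1.6k) for all k ≥ 1. -/
import Mathlib


theorem variance_recursion_sublinear (σ2 : ℝ) (hσ : 0 < σ2) (V : ℕ → ℝ)
    (hpos : ∀ k, 0 < V k) (h1 : V 1 ≤ σ2)
    (hrec : ∀ k, 2 ≤ k → V k < (1.6 / σ2 + 1 / V (k - 1))⁻¹)
    (h1' : V 1 < σ2 / 1.6) :
    ∀ k, 1 ≤ k → V k < σ2 / (1.6 * k) := by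
  intro k hk
  induction k with
  | zero => omega
  | succ n ih =>
    rcases Nat.lt_or_ge n 1 with h | hn
    · interval_cases n
      simpa using h1'
    · have ihn := ih hn
      have hrec' := hrec (n + 1) (by omega)
      simp only [Nat.add_sub_cancel] at hrec'
      have hVn := hpos n
      have hnp : (0:ℝ) < n := by exact_mod_cast hn
      -- 1 / V n > 1.6 * n / σ2
      have key : 1.6 * (n:ℝ) / σ2 < 1 / V n := by
        rw [div_lt_div_iff₀ hσ hVn]
        have h2 : 0 < 1.6 * (n:ℝ) := by positivity
        calc 1.6 * (n:ℝ) * V n < 1.6 * n * (σ2 / (1.6 * n)) := by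
              exact mul_lt_mul_of_pos_left ihn h2
          _ = σ2 := by field_simp
          _ = 1 * σ2 := (one_mul _).symm
      have hgt : 1.6 * ((n:ℝ) + 1) / σ2 < 1.6 / σ2 + 1 / V n := by
        have : 1.6 * ((n:ℝ) + 1) / σ2 = 1.6 / σ2 + 1.6 * n / σ2 := by ring
        rw [this]
        linarith
      have hgt0 : (0:ℝ) < 1.6 * ((n:ℝ) + 1) / σ2 := by positivity
      have := inv_strictAnti₀ hgt0 hgt
      rw [inv_div] at this
      have hfin : V (n + 1) < σ2 / (1.6 * ((n:ℝ) + 1)) := lt_trans hrec' this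
      convert hfin using 3
      push_cast
      ring
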